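/- arXiv:2206.06766 — 4 statements merged into one kernel-verified Lean document; each statement's English description precedes it below -/
import Mathlib

section
/- Let a : ℝ → ℝ be twice continuously differentiable with a, a', a'' bounded, and let b : ℝ → ℝ be continuously differentiable with b, b' bounded. Then for every φ ∈ 𝒮(ℝ): ∫ (−a(x)φ''(x) + b(x)φ'(x))·φ(x) dx = −(1/2)∫ a''(x)φ(x)² dx + ∫ a(x)·φ'(x)² dx − (1/2)∫ b'(x)φ(x)² dx. -/
/-!
Integrate the product rule for `c * (f * g)` over `ℝ`, where `c` is bounded with bounded
derivative and `f`, `g` are Schwartz: every term is integrable, so `∫ (c f g)' = 0`. With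
`c = a`, `f = φ'`, `g = φ` this turns `∫ a φ'' φ` into `-∫ a' φ' φ - ∫ a φ'²`; with `f = g = φ`
it gives `∫ c φ' φ = -½ ∫ c' φ²`, which is applied to `c = a'` and `c = b`.
-/

open MeasureTheory SchwartzMap

section

variable {D : Type*} [NormedAddCommGroup D] [NormedSpace ℝ D] [MeasurableSpace D] [BorelSpace D]
  [SecondCountableTopology D] {μ : Measure D} [μ.HasTemperateGrowth]

theorem SchwartzMap.integrable_bdd_mul_mul {c : D → ℝ} {C : ℝ} (hc : AEStronglyMeasurable c μ)
    (hC : ∀ x, |c x| ≤ C) (f g : 𝓢(D, ℝ)) : Integrable (fun x ↦ c x * (f x * g x)) μ :=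
  ((g.integrable (μ := μ)).bdd_mul f.continuous.aestronglyMeasurable
    (ae_of_all _ (norm_le_seminorm ℝ f))).bdd_mul hc (ae_of_all _ hC)

end

theorem SchwartzMap.integral_mul_deriv_mul {c : ℝ → ℝ} {C C' : ℝ} (hc : Differentiable ℝ c)
    (hC : ∀ x, |c x| ≤ C) (hC' : ∀ x, |deriv c x| ≤ C') (f g : 𝓢(ℝ, ℝ)) :
    ∫ x, c x * (deriv f x * g x) =
      -(∫ x, deriv c x * (f x * g x)) - ∫ x, c x * (f x * deriv g x) := by
  have hc_meas : AEStronglyMeasurable c := hc.continuous.aestronglyMeasurable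
  have i₁ := integrable_bdd_mul_mul (μ := volume) (measurable_deriv c).aestronglyMeasurable hC' f g
  have i₂ : Integrable fun x ↦ c x * (deriv f x * g x) :=
    integrable_bdd_mul_mul hc_meas hC (derivCLM ℝ ℝ f) g
  have i₃ : Integrable fun x ↦ c x * (f x * deriv g x) :=
    integrable_bdd_mul_mul hc_meas hC f (derivCLM ℝ ℝ g)
  have hderiv : ∀ x, HasDerivAt (fun x ↦ c x * (f x * g x))
      (deriv c x * (f x * g x) + c x * (deriv f x * g x) + c x * (f x * deriv g x)) x := by
    intro x
    refine ((hc x).hasDerivAt.mul ((f.hasDerivAt x).mul (g.hasDerivAt x))).congr_deriv ?_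
    simp only [Pi.mul_apply]; ring
  have hzero := integral_eq_zero_of_hasDerivAt_of_integrable hderiv ((i₁.fun_add i₂).fun_add i₃)
    (integrable_bdd_mul_mul hc_meas hC f g)
  rw [integral_add (i₁.fun_add i₂) i₃, integral_add i₁ i₂] at hzero
  linarith

theorem SchwartzMap.integral_mul_deriv_mul_self {c : ℝ → ℝ} {C C' : ℝ} (hc : Differentiable ℝ c)
    (hC : ∀ x, |c x| ≤ C) (hC' : ∀ x, |deriv c x| ≤ C') (f : 𝓢(ℝ, ℝ)) :
    ∫ x, c x * (deriv f x * f x) = -(1 / 2) * ∫ x, deriv c x * f x ^ 2 := by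
  have h := integral_mul_deriv_mul hc hC hC' f f
  simp only [mul_comm (f _) (deriv f _), ← pow_two] at h
  linarith

/-- Integration-by-parts identity of Lemma B.2(i): for `a` of class `C²` with
`a, a', a''` bounded and `b` of class `C¹` with `b, b'` bounded, and every
Schwartz function `φ`,
`∫ (−aφ'' + bφ')·φ = −(1/2)∫ a''·φ² + ∫ a·(φ')² − (1/2)∫ b'·φ²`. -/
theorem stmt_1 (a b : ℝ → ℝ)
    (ha : ContDiff ℝ 2 a)
    (ha0 : ∃ C, ∀ x, |a x| ≤ C)
    (ha1 : ∃ C, ∀ x, |deriv a x| ≤ C)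
    (ha2 : ∃ C, ∀ x, |deriv (deriv a) x| ≤ C)
    (hb : ContDiff ℝ 1 b)
    (hb0 : ∃ C, ∀ x, |b x| ≤ C)
    (hb1 : ∃ C, ∀ x, |deriv b x| ≤ C)
    (φ : 𝓢(ℝ, ℝ)) :
    ∫ x, (-a x * deriv (deriv φ) x + b x * deriv (φ : ℝ → ℝ) x) * φ x =
      -(1 / 2) * (∫ x, deriv (deriv a) x * (φ x) ^ 2)
        + (∫ x, a x * (deriv (φ : ℝ → ℝ) x) ^ 2)
        - (1 / 2) * (∫ x, deriv b x * (φ x) ^ 2) := by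
  obtain ⟨A₀, hA₀⟩ := ha0
  obtain ⟨A₁, hA₁⟩ := ha1
  obtain ⟨A₂, hA₂⟩ := ha2
  obtain ⟨B₀, hB₀⟩ := hb0
  obtain ⟨B₁, hB₁⟩ := hb1
  have ha_diff : Differentiable ℝ a := ha.differentiable two_ne_zero
  have ha'_diff : Differentiable ℝ (deriv a) := ha.differentiable_deriv_two
  have hb_diff : Differentiable ℝ b := hb.differentiable one_ne_zero
  have i_a : Integrable fun x ↦ a x * (deriv (deriv φ) x * φ x) :=
    integrable_bdd_mul_mul ha_diff.continuous.aestronglyMeasurable hA₀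
      (derivCLM ℝ ℝ (derivCLM ℝ ℝ φ)) φ
  have i_b : Integrable fun x ↦ b x * (deriv φ x * φ x) :=
    integrable_bdd_mul_mul hb_diff.continuous.aestronglyMeasurable hB₀ (derivCLM ℝ ℝ φ) φ
  have h_second : ∫ x, a x * (deriv (deriv φ) x * φ x) =
      -(∫ x, deriv a x * (deriv φ x * φ x)) - ∫ x, a x * deriv φ x ^ 2 := by
    have h := integral_mul_deriv_mul ha_diff hA₀ hA₁ (derivCLM ℝ ℝ φ) φ
    simp only [derivCLM_apply, ← pow_two] at h
    exact h
  have h_a' := integral_mul_deriv_mul_self ha'_diff hA₁ hA₂ φ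
  have h_b := integral_mul_deriv_mul_self hb_diff hB₀ hB₁ φ
  calc ∫ x, (-a x * deriv (deriv φ) x + b x * deriv φ x) * φ x
      = -(∫ x, a x * (deriv (deriv φ) x * φ x)) + ∫ x, b x * (deriv φ x * φ x) := by
        rw [← integral_neg, ← integral_add i_a.fun_neg i_b]
        congr 1 with x
        ring
    _ = _ := by rw [h_second, h_a', h_b]; ring
end

section
/- Let a : ℝ → ℝ be twice continuously differentiable with a, a', a'' bounded and a(x) ≥ 0 for all x, and let b : ℝ → ℝ be continuously differentiable with b, b' bounded. Set β := (1/2)(sup_{x∈ℝ}|a''(x)| + sup_{x∈ℝ}|b'(x)|). Then for every φ ∈ 𝒮(ℝ): ∫ (−a(x)φ''(x) + b(x)φ'(x))·φ(x) dx ≥ −β · ∫ φ(x)² dx. -/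
/-!
Integration by parts gives `∫ -a φ'' φ = ∫ a φ'² + ∫ a' φ φ'`, and for a weight `u` it gives
`∫ u φ φ' = -(1/2) ∫ u' φ²`, since `φ φ' = (φ²/2)'`. With `u = a'` and `u = b` the quadratic form
becomes `∫ a φ'² - (1/2) ∫ (a'' + b') φ²`: the first term is nonnegative because `a ≥ 0`, and the
second is at least `-β ∫ φ²`.
-/

open MeasureTheory SchwartzMap

theorem le_ciSup_abs {ι : Type*} {f : ι → ℝ} (hf : ∃ C, ∀ i, |f i| ≤ C) (i : ι) :
    f i ≤ ⨆ j, |f j| :=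
  let ⟨C, hC⟩ := hf
  (le_abs_self _).trans (le_ciSup ⟨C, by rintro _ ⟨j, rfl⟩; exact hC j⟩ i)

namespace SchwartzMap

section Weighted

variable {D : Type*} [NormedAddCommGroup D] [NormedSpace ℝ D] [MeasurableSpace D]
  [BorelSpace D] [SecondCountableTopology D] {μ : Measure D} [μ.HasTemperateGrowth] {c : D → ℝ}

theorem integrable_mul_mul (hc : Continuous c) (hcb : ∃ C, ∀ x, |c x| ≤ C) (ψ χ : 𝓢(D, ℝ)) :
    Integrable (fun x => c x * ψ x * χ x) μ := by
  obtain ⟨C, hC⟩ := hcb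
  refine χ.integrable.bdd_mul (c := C * ‖ψ.toBoundedContinuousFunction‖)
    (hc.mul ψ.continuous).aestronglyMeasurable (Filter.Eventually.of_forall fun x => ?_)
  rw [norm_mul]
  exact mul_le_mul (hC x) (ψ.toBoundedContinuousFunction.norm_coe_le_norm x) (norm_nonneg _)
    ((abs_nonneg _).trans (hC x))

theorem integral_mul_mul_le (hc : Continuous c) (hcb : ∃ C, ∀ x, |c x| ≤ C) {M : ℝ}
    (hM : ∀ x, c x ≤ M) (ψ : 𝓢(D, ℝ)) :
    ∫ x, c x * ψ x * ψ x ∂μ ≤ M * ∫ x, ψ x ^ 2 ∂μ := by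
  have hψ2 : Integrable (fun x => ψ x ^ 2) μ := by
    simpa [sq] using integrable_mul_mul (μ := μ) continuous_const ⟨1, fun _ => abs_one.le⟩ ψ ψ
  rw [← integral_const_mul]
  refine integral_mono (integrable_mul_mul hc hcb ψ ψ) (hψ2.const_mul M) fun x => ?_
  rw [mul_assoc, ← sq]
  exact mul_le_mul_of_nonneg_right (hM x) (sq_nonneg _)

end Weighted

variable {u : ℝ → ℝ}

theorem integral_mul_mul_deriv (hu : ContDiff ℝ 1 u) (hu0 : ∃ C, ∀ x, |u x| ≤ C)
    (hu1 : ∃ C, ∀ x, |deriv u x| ≤ C) (ψ χ : 𝓢(ℝ, ℝ)) :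
    ∫ x, u x * ψ x * deriv χ x =
      -(∫ x, deriv u x * ψ x * χ x) - ∫ x, u x * deriv ψ x * χ x := by
  have hu_cont := hu.continuous
  have hu_diff := hu.differentiable one_ne_zero
  have hu'ψχ : Integrable (fun x => deriv u x * ψ x * χ x) :=
    integrable_mul_mul (hu.continuous_deriv le_rfl) hu1 ψ χ
  have huψ'χ : Integrable (fun x => u x * deriv ψ x * χ x) :=
    integrable_mul_mul hu_cont hu0 (derivCLM ℝ ℝ ψ) χ
  have hsum : Integrable (fun x => (deriv u x * ψ x + u x * deriv ψ x) * χ x) := by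
    simp only [add_mul]
    exact hu'ψχ.add huψ'χ
  calc ∫ x, u x * ψ x * deriv χ x
      = -∫ x, (deriv u x * ψ x + u x * deriv ψ x) * χ x :=
        integral_mul_deriv_eq_deriv_mul_of_integrable
          (fun x _ => (hu_diff x).hasDerivAt.mul (ψ.hasDerivAt x)) (fun x _ => χ.hasDerivAt x)
          (integrable_mul_mul hu_cont hu0 ψ (derivCLM ℝ ℝ χ)) hsum
          (integrable_mul_mul hu_cont hu0 ψ χ)
    _ = -(∫ x, deriv u x * ψ x * χ x) - ∫ x, u x * deriv ψ x * χ x := by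
        simp only [add_mul]
        rw [integral_add hu'ψχ huψ'χ]
        ring

theorem integral_mul_mul_deriv_self (hu : ContDiff ℝ 1 u) (hu0 : ∃ C, ∀ x, |u x| ≤ C)
    (hu1 : ∃ C, ∀ x, |deriv u x| ≤ C) (ψ : 𝓢(ℝ, ℝ)) :
    ∫ x, u x * ψ x * deriv ψ x = -(1 / 2) * ∫ x, deriv u x * ψ x * ψ x := by
  have h := integral_mul_mul_deriv hu hu0 hu1 ψ ψ
  have hcomm : ∫ x, u x * deriv ψ x * ψ x = ∫ x, u x * ψ x * deriv ψ x := by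
    congr 1 with x
    ring
  linarith

theorem integral_mul_mul_deriv_deriv_self (hu : ContDiff ℝ 2 u) (hu0 : ∃ C, ∀ x, |u x| ≤ C)
    (hu1 : ∃ C, ∀ x, |deriv u x| ≤ C) (hu2 : ∃ C, ∀ x, |deriv (deriv u) x| ≤ C)
    (ψ : 𝓢(ℝ, ℝ)) :
    ∫ x, u x * ψ x * deriv (deriv ψ) x =
      (1 / 2) * (∫ x, deriv (deriv u) x * ψ x * ψ x) - ∫ x, u x * deriv ψ x * deriv ψ x := by
  have h : ∫ x, u x * ψ x * deriv (deriv ψ) x =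
      -(∫ x, deriv u x * ψ x * deriv ψ x) - ∫ x, u x * deriv ψ x * deriv ψ x :=
    integral_mul_mul_deriv (hu.of_le (by norm_num)) hu0 hu1 ψ (derivCLM ℝ ℝ ψ)
  rw [h, integral_mul_mul_deriv_self (hu.deriv' (n := 1)) hu1 hu2 ψ]
  ring

end SchwartzMap

/-- Accretivity estimate of Lemma B.2(i): with
`β = (1/2)(sup |a''| + sup |b'|)`, for every Schwartz function `φ`,
`∫ (−aφ'' + bφ')·φ ≥ −β ∫ φ²`. -/
theorem stmt_2 (a b : ℝ → ℝ)
    (ha : ContDiff ℝ 2 a)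
    (ha0 : ∃ C, ∀ x, |a x| ≤ C)
    (ha1 : ∃ C, ∀ x, |deriv a x| ≤ C)
    (ha2 : ∃ C, ∀ x, |deriv (deriv a) x| ≤ C)
    (hapos : ∀ x, 0 ≤ a x)
    (hb : ContDiff ℝ 1 b)
    (hb0 : ∃ C, ∀ x, |b x| ≤ C)
    (hb1 : ∃ C, ∀ x, |deriv b x| ≤ C)
    (β : ℝ)
    (hβ : β = (1 / 2) * ((⨆ x : ℝ, |deriv (deriv a) x|) + ⨆ x : ℝ, |deriv b x|))
    (φ : 𝓢(ℝ, ℝ)) :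
    ∫ x, (-a x * deriv (deriv φ) x + b x * deriv (φ : ℝ → ℝ) x) * φ x ≥
      -β * ∫ x, (φ x) ^ 2 := by
  have haφφ'' := integral_mul_mul_deriv_deriv_self ha ha0 ha1 ha2 φ
  have hbφφ' := integral_mul_mul_deriv_self hb hb0 hb1 φ
  have haφ'φ' : 0 ≤ ∫ x, a x * deriv φ x * deriv φ x :=
    integral_nonneg fun x => by
      rw [mul_assoc]
      exact mul_nonneg (hapos x) (mul_self_nonneg _)
  have ha''φφ : ∫ x, deriv (deriv a) x * φ x * φ x ≤
      (⨆ x, |deriv (deriv a) x|) * ∫ x, φ x ^ 2 :=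
    integral_mul_mul_le ((ha.deriv' (n := 1)).continuous_deriv le_rfl) ha2 (le_ciSup_abs ha2) φ
  have hb'φφ : ∫ x, deriv b x * φ x * φ x ≤ (⨆ x, |deriv b x|) * ∫ x, φ x ^ 2 :=
    integral_mul_mul_le (hb.continuous_deriv le_rfl) hb1 (le_ciSup_abs hb1) φ
  have hsplit : ∫ x, (-a x * deriv (deriv φ) x + b x * deriv (φ : ℝ → ℝ) x) * φ x =
      (∫ x, b x * φ x * deriv φ x) - ∫ x, a x * φ x * deriv (deriv φ) x := by
    have hint_a : Integrable (fun x => a x * φ x * deriv (deriv φ) x) :=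
      integrable_mul_mul ha.continuous ha0 φ (derivCLM ℝ ℝ (derivCLM ℝ ℝ φ))
    have hint_b : Integrable (fun x => b x * φ x * deriv φ x) :=
      integrable_mul_mul hb.continuous hb0 φ (derivCLM ℝ ℝ φ)
    rw [← integral_sub hint_b hint_a]
    congr 1 with x
    ring
  rw [hsplit, haφφ'', hbφφ', hβ]
  linarith
end

section
/- Let μ₀ > 0, let a : ℝ → ℝ be twice continuously differentiable with a, a', a'' bounded and a(x) ≥ μ₀ for all x, and let b : ℝ → ℝ be continuously differentiable with b, b' bounded. Set β := (1/2)(sup_{x∈ℝ}|a''(x)| + sup_{x∈ℝ}|b'(x)|). Then for every φ ∈ 𝒮(ℝ): ∫ (−a(x)φ'''(x) + b(x)φ''(x))·φ'(x) dx ≥ −(β²/(4μ₀)) · ‖φ‖_{L²}². -/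
open MeasureTheory SchwartzMap

/-! With `ψ = φ'`, integrating by parts against the weights `a`, `a'` and `b` gives
`∫ (-a ψ'' + b ψ') ψ = ∫ a ψ'² - ½ ∫ (a'' + b') ψ² ≥ μ₀ ‖φ''‖² - β ‖φ'‖²`.
Since `‖φ'‖² = -∫ φ φ''`, the pointwise AM-GM bound `-β φ φ'' ≤ μ₀ φ''² + β²/(4μ₀) φ²`
absorbs the negative term into `μ₀ ‖φ''‖²`, leaving `-(β²/(4μ₀)) ‖φ‖²`. -/

/-- `‖u‖_{L²} := (∫ u²)^{1/2}`. -/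
noncomputable def L2norm (u : ℝ → ℝ) : ℝ := Real.sqrt (∫ x, u x ^ 2)

namespace SchwartzMap

variable {w c : ℝ → ℝ} {C C' : ℝ}

@[simp]
lemma coe_derivCLM (f : 𝓢(ℝ, ℝ)) : ⇑(derivCLM ℝ ℝ f) = deriv f := rfl

lemma integrable_mul (f g : 𝓢(ℝ, ℝ)) : Integrable fun x => f x * g x :=
  (pairing (ContinuousLinearMap.mul ℝ ℝ) f g).integrable

lemma integrable_weight_mul (hc_meas : AEStronglyMeasurable c) (hc : ∀ x, |c x| ≤ C)
    (f g : 𝓢(ℝ, ℝ)) : Integrable fun x => c x * (f x * g x) :=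
  (integrable_mul f g).bdd_mul hc_meas (ae_of_all _ fun x => by simpa using hc x)

lemma integral_weight_mul_deriv (hw : Differentiable ℝ w) (hw0 : ∀ x, |w x| ≤ C)
    (hw1 : ∀ x, |deriv w x| ≤ C') (f g : 𝓢(ℝ, ℝ)) :
    ∫ x, w x * (f x * deriv g x) =
      -(∫ x, deriv w x * (f x * g x)) - ∫ x, w x * (deriv f x * g x) := by
  have hw_meas : AEStronglyMeasurable w := hw.continuous.aestronglyMeasurable
  have I₀ := integrable_weight_mul hw_meas hw0 f g
  have I₁ := integrable_weight_mul (measurable_deriv w).aestronglyMeasurable hw1 f g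
  have I₂ := integrable_weight_mul hw_meas hw0 (derivCLM ℝ ℝ f) g
  have I₃ := integrable_weight_mul hw_meas hw0 f (derivCLM ℝ ℝ g)
  simp only [coe_derivCLM] at I₂ I₃
  have I₂₃ : Integrable fun x => w x * (deriv f x * g x) + w x * (f x * deriv g x) := I₂.add I₃
  have h : ∫ x, (deriv w x * (f x * g x) + (w x * (deriv f x * g x) + w x * (f x * deriv g x)))
      = 0 :=
    integral_eq_zero_of_hasDerivAt_of_integrable
      (fun x => ((hw x).hasDerivAt.mul ((f.hasDerivAt x).mul (g.hasDerivAt x))).congr_deriv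
        (by simp only [Pi.mul_apply]; ring))
      (I₁.add I₂₃) I₀
  rw [integral_add I₁ I₂₃, integral_add I₂ I₃] at h
  linarith

lemma integral_weight_mul_deriv_self (hw : Differentiable ℝ w) (hw0 : ∀ x, |w x| ≤ C)
    (hw1 : ∀ x, |deriv w x| ≤ C') (f : 𝓢(ℝ, ℝ)) :
    ∫ x, w x * (f x * deriv f x) = -(1 / 2) * ∫ x, deriv w x * f x ^ 2 := by
  have h := integral_weight_mul_deriv hw hw0 hw1 f f
  simp only [mul_comm (deriv f _) (f _), ← sq] at h
  linarith

lemma integral_weight_mul_sq_le (hc_meas : AEStronglyMeasurable c) (hc : ∀ x, |c x| ≤ C)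
    (f : 𝓢(ℝ, ℝ)) : ∫ x, c x * f x ^ 2 ≤ C * ∫ x, f x ^ 2 := by
  simp only [sq, ← integral_const_mul]
  exact integral_mono (integrable_weight_mul hc_meas hc f f) ((integrable_mul f f).const_mul C)
    fun x => mul_le_mul_of_nonneg_right (le_of_abs_le (hc x)) (mul_self_nonneg _)

lemma le_integral_weight_mul_sq (hc_meas : AEStronglyMeasurable c) (hc : ∀ x, |c x| ≤ C)
    {m : ℝ} (hm : ∀ x, m ≤ c x) (f : 𝓢(ℝ, ℝ)) : m * ∫ x, f x ^ 2 ≤ ∫ x, c x * f x ^ 2 := by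
  simp only [sq, ← integral_const_mul]
  exact integral_mono ((integrable_mul f f).const_mul m) (integrable_weight_mul hc_meas hc f f)
    fun x => mul_le_mul_of_nonneg_right (hm x) (mul_self_nonneg _)

lemma le_integral_elliptic_form {a b : ℝ → ℝ} {μ₀ Ca Ca' Cb A B : ℝ}
    (ha : Differentiable ℝ a) (ha' : Differentiable ℝ (deriv a)) (hb : Differentiable ℝ b)
    (ha0 : ∀ x, |a x| ≤ Ca) (ha1 : ∀ x, |deriv a x| ≤ Ca') (ha2 : ∀ x, |deriv (deriv a) x| ≤ A)
    (hb0 : ∀ x, |b x| ≤ Cb) (hb1 : ∀ x, |deriv b x| ≤ B) (halb : ∀ x, μ₀ ≤ a x)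
    (ψ : 𝓢(ℝ, ℝ)) :
    μ₀ * (∫ x, deriv ψ x ^ 2) - (A + B) / 2 * ∫ x, ψ x ^ 2 ≤
      ∫ x, (-a x * deriv (deriv ψ) x + b x * deriv ψ x) * ψ x := by
  have ha_meas : AEStronglyMeasurable a := ha.continuous.aestronglyMeasurable
  have hsplit : ∫ x, (-a x * deriv (deriv ψ) x + b x * deriv ψ x) * ψ x =
      (∫ x, b x * (ψ x * deriv ψ x)) - ∫ x, a x * (ψ x * deriv (deriv ψ) x) := by
    have Ia := integrable_weight_mul ha_meas ha0 ψ (derivCLM ℝ ℝ (derivCLM ℝ ℝ ψ))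
    have Ib := integrable_weight_mul hb.continuous.aestronglyMeasurable hb0 ψ (derivCLM ℝ ℝ ψ)
    simp only [coe_derivCLM] at Ia Ib
    rw [← integral_sub Ib Ia]
    congr 1 with x
    ring
  have ha_parts := integral_weight_mul_deriv ha ha0 ha1 ψ (derivCLM ℝ ℝ ψ)
  have ha'_parts := integral_weight_mul_deriv_self ha' ha1 ha2 ψ
  have hb_parts := integral_weight_mul_deriv_self hb hb0 hb1 ψ
  have hcoercive := le_integral_weight_mul_sq ha_meas ha0 halb (derivCLM ℝ ℝ ψ)
  have hA := integral_weight_mul_sq_le (measurable_deriv _).aestronglyMeasurable ha2 ψ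
  have hB := integral_weight_mul_sq_le (measurable_deriv _).aestronglyMeasurable hb1 ψ
  simp only [coe_derivCLM, ← sq] at ha_parts hcoercive
  linarith

lemma mul_integral_deriv_sq_le {μ : ℝ} (hμ : 0 < μ) (β : ℝ) (φ : 𝓢(ℝ, ℝ)) :
    β * ∫ x, deriv φ x ^ 2 ≤
      μ * (∫ x, deriv (deriv φ) x ^ 2) + β ^ 2 / (4 * μ) * ∫ x, φ x ^ 2 := by
  have hparts : ∫ x, deriv φ x ^ 2 = -∫ x, φ x * deriv (deriv φ) x := by
    simpa only [coe_derivCLM, neg_neg, sq]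
      using congrArg Neg.neg (integral_mul_deriv_eq_neg_deriv_mul φ (derivCLM ℝ ℝ φ)).symm
  have I : Integrable fun x => φ x * deriv (deriv φ) x :=
    integrable_mul φ (derivCLM ℝ ℝ (derivCLM ℝ ℝ φ))
  have I₂ : Integrable fun x => μ * deriv (deriv φ) x ^ 2 := by
    have := integrable_mul (derivCLM ℝ ℝ (derivCLM ℝ ℝ φ)) (derivCLM ℝ ℝ (derivCLM ℝ ℝ φ))
    simpa only [sq, coe_derivCLM] using this.const_mul μ
  have I₀ : Integrable fun x => β ^ 2 / (4 * μ) * φ x ^ 2 := by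
    simpa only [sq] using (integrable_mul φ φ).const_mul _
  have hAMGM : ∫ x, β * -(φ x * deriv (deriv φ) x) ≤
      ∫ x, (μ * deriv (deriv φ) x ^ 2 + β ^ 2 / (4 * μ) * φ x ^ 2) := by
    refine integral_mono (I.neg.const_mul β) (I₂.add I₀) fun x => ?_
    have h4 : 4 * μ * (β ^ 2 / (4 * μ)) = β ^ 2 := by field_simp
    nlinarith [sq_nonneg (2 * μ * deriv (deriv φ) x + β * φ x)]
  rwa [integral_const_mul, integral_neg, integral_add I₂ I₀, integral_const_mul,
    integral_const_mul, ← hparts] at hAMGM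

end SchwartzMap

/-- Regularity Lemma B.3 with explicit constant `C = 1/4`:
`⟨A(t)φ', φ'⟩ ≥ −(β²/(4μ₀))‖φ‖²` where `A(t)ψ = −aψ'' + bψ'` and
`β = (1/2)(sup |a''| + sup |b'|)`. -/
theorem stmt_7 (μ₀ : ℝ) (hμ₀ : 0 < μ₀) (a b : ℝ → ℝ)
    (ha : ContDiff ℝ 2 a)
    (ha0 : ∃ C, ∀ x, |a x| ≤ C)
    (ha1 : ∃ C, ∀ x, |deriv a x| ≤ C)
    (ha2 : ∃ C, ∀ x, |deriv (deriv a) x| ≤ C)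
    (halb : ∀ x, μ₀ ≤ a x)
    (hb : ContDiff ℝ 1 b)
    (hb0 : ∃ C, ∀ x, |b x| ≤ C)
    (hb1 : ∃ C, ∀ x, |deriv b x| ≤ C)
    (β : ℝ)
    (hβ : β = (1 / 2) * ((⨆ x : ℝ, |deriv (deriv a) x|) + ⨆ x : ℝ, |deriv b x|))
    (φ : 𝓢(ℝ, ℝ)) :
    ∫ x, (-a x * deriv (deriv (deriv φ)) x + b x * deriv (deriv φ) x)
        * deriv (φ : ℝ → ℝ) x ≥
      -(β ^ 2 / (4 * μ₀)) * L2norm (fun x => φ x) ^ 2 := by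
  obtain ⟨Ca, hCa⟩ := ha0
  obtain ⟨Ca', hCa'⟩ := ha1
  obtain ⟨Ca'', hCa''⟩ := ha2
  obtain ⟨Cb, hCb⟩ := hb0
  obtain ⟨Cb', hCb'⟩ := hb1
  have ha' : Differentiable ℝ (deriv a) :=
    (contDiff_succ_iff_deriv.mp (show ContDiff ℝ (1 + 1) a from ha)).2.2.differentiable
      one_ne_zero
  have henergy := le_integral_elliptic_form (ha.differentiable (by norm_num)) ha'
    (hb.differentiable one_ne_zero) hCa hCa' (le_ciSup ⟨Ca'', Set.forall_mem_range.2 hCa''⟩)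
    hCb (le_ciSup ⟨Cb', Set.forall_mem_range.2 hCb'⟩) halb (derivCLM ℝ ℝ φ)
  rw [coe_derivCLM, ← one_div_mul_eq_div, ← hβ] at henergy
  have hL2 : L2norm (fun x => φ x) ^ 2 = ∫ x, φ x ^ 2 :=
    Real.sq_sqrt (integral_nonneg fun _ => sq_nonneg _)
  rw [hL2]
  linarith [mul_integral_deriv_sq_le hμ₀ β φ]
end

section
/- Assume A_i ≥ k1 for all i, |B_i| ≤ R, |C_i| ≤ R, |D_i| ≤ R and 0 ≤ q_i ≤ R for all i. Then for every ρ > 0 there exists a constant κ > 0, depending only on E, k1, R and ρ (in particular independent of n, of u_e, and of the particular parameter values), such that for all w, v ∈ ℝⁿ with max_i |w_i| ≤ ρ and max_i |v_i| ≤ ρ: max_{1≤i≤n} |f_i(w) − f_i(v)| ≤ κ · max_{1≤i≤n} |w_i − v_i|. -/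
/-!
The only nonlinear ingredient of `f_i` is the Arrhenius factor. Since
`g(θ) = expNegInvGlue (θ / E)` and `expNegInvGlue` is smooth with derivative
`t² e⁻ᵗ ≤ 2` (where `t = x⁻¹`) on `x > 0` and `0` on `x < 0`, the factor `g` is
globally `2/E`-Lipschitz with values in `[0, 1]`. Every other term of `f_i` is
bilinear in coefficients bounded by `R` and in the `w_j`, so `f_i(w) − f_i(v)`
splits into differences each bounded by a multiple of `max_j |w_j − v_j|`;
dividing by `A_i ≥ k1` gives `κ = R (6 + 2 (ρ + 1) / E) / k1`.
-/

/-- The Arrhenius-law factor of the combustion model (equation (6) of the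
paper): `g(θ) = exp(−E/θ)` for `θ > 0` and `g(θ) = 0` for `θ ≤ 0`. -/
noncomputable def arrhenius (E : ℝ) : ℝ → ℝ := fun θ =>
  if 0 < θ then Real.exp (-E / θ) else 0

/-- The source term (5) of the paper evaluated at a fixed point `(x,t)`, with
the conventions `w_0 = w_{n+1} = u_e`:
`f_i(w) = (−C_i w_i + (B_i w_i + D_i) g(w_i) − q_{i−1}(w_i − w_{i−1})
          + q_i(w_{i+1} − w_i)) / A_i`. -/
noncomputable def reaction (E : ℝ) (n : ℕ) (A B C D q : ℕ → ℝ) (ue : ℝ)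
    (w : ℕ → ℝ) (i : ℕ) : ℝ :=
  (-C i * w i + (B i * w i + D i) * arrhenius E (w i)
    - q (i - 1) * (w i - (if 1 ≤ i - 1 ∧ i - 1 ≤ n then w (i - 1) else ue))
    + q i * ((if 1 ≤ i + 1 ∧ i + 1 ≤ n then w (i + 1) else ue) - w i)) / A i

open Real

namespace expNegInvGlue

theorem hasDerivAt_of_pos {x : ℝ} (hx : 0 < x) :
    HasDerivAt expNegInvGlue (exp (-x⁻¹) * (x ^ 2)⁻¹) x := by
  have h : HasDerivAt (fun y => exp (-y⁻¹)) (exp (-x⁻¹) * (x ^ 2)⁻¹) x := by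
    simpa using ((hasDerivAt_inv hx.ne').neg).exp
  refine h.congr_of_eventuallyEq ?_
  filter_upwards [lt_mem_nhds hx] with y hy
  simp [expNegInvGlue, hy.not_ge]

theorem deriv_of_neg {x : ℝ} (hx : x < 0) : deriv expNegInvGlue x = 0 := by
  have h : expNegInvGlue =ᶠ[nhds x] fun _ => 0 := by
    filter_upwards [gt_mem_nhds hx] with y hy using zero_of_nonpos hy.le
  simp [h.deriv_eq]

theorem abs_deriv_le_two (x : ℝ) : |deriv expNegInvGlue x| ≤ 2 := by
  have hclosed : IsClosed {x | |deriv expNegInvGlue x| ≤ 2} :=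
    isClosed_le ((expNegInvGlue.contDiff (n := 1)).continuous_deriv le_rfl).abs
      continuous_const
  have hoff : ({0}ᶜ : Set ℝ) ⊆ {x | |deriv expNegInvGlue x| ≤ 2} := by
    intro x hx
    rcases lt_or_gt_of_ne hx with hneg | hpos
    · simp [deriv_of_neg hneg]
    · set t := x⁻¹
      have ht : 0 < t := inv_pos.2 hpos
      have hquad : t ^ 2 ≤ 2 * exp t := by
        nlinarith [quadratic_le_exp_of_nonneg ht.le]
      rw [Set.mem_ofPred_eq, (hasDerivAt_of_pos hpos).deriv, ← inv_pow, exp_neg,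
        abs_of_nonneg (by positivity), inv_mul_le_iff₀ (exp_pos t)]
      linarith
  -- at `x = 0` the bound follows by continuity of the derivative
  exact hclosed.closure_subset_iff.2 hoff <| by simp [(dense_compl_singleton (0 : ℝ)).closure_eq]

theorem lipschitzWith_two : LipschitzWith 2 expNegInvGlue :=
  lipschitzWith_of_nnnorm_deriv_le (expNegInvGlue.contDiff (n := 1)).differentiable_one
    fun x => by
      rw [← NNReal.coe_le_coe, coe_nnnorm]
      exact abs_deriv_le_two x

end expNegInvGlue

theorem arrhenius_eq_expNegInvGlue {E : ℝ} (hE : 0 < E) (θ : ℝ) :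
    arrhenius E θ = expNegInvGlue (θ / E) := by
  have hpos : 0 < θ ↔ ¬θ / E ≤ 0 := by rw [not_le, div_pos_iff_of_pos_right hE]
  simp only [arrhenius, expNegInvGlue, hpos, inv_div, neg_div]
  split_ifs <;> rfl

theorem arrhenius_nonneg (E θ : ℝ) : 0 ≤ arrhenius E θ := by
  unfold arrhenius; split_ifs <;> positivity

theorem arrhenius_le_one {E : ℝ} (hE : 0 ≤ E) (θ : ℝ) : arrhenius E θ ≤ 1 := by
  unfold arrhenius
  split_ifs with hθ
  · exact exp_le_one_iff.2 (by rw [neg_div]; exact neg_nonpos.2 (by positivity))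
  · exact zero_le_one

theorem abs_arrhenius_sub_le {E : ℝ} (hE : 0 < E) (x y : ℝ) :
    |arrhenius E x - arrhenius E y| ≤ 2 / E * |x - y| := by
  have := expNegInvGlue.lipschitzWith_two.dist_le_mul (x / E) (y / E)
  rw [Real.dist_eq, Real.dist_eq, ← sub_div, abs_div, abs_of_pos hE] at this
  rw [arrhenius_eq_expNegInvGlue hE, arrhenius_eq_expNegInvGlue hE]
  calc _ ≤ _ := this
    _ = _ := by push_cast; ring

section Estimates

variable {E R ρ M : ℝ}

theorem abs_arrheniusTerm_sub_le (hE : 0 < E) {B D x y : ℝ} (hB : |B| ≤ R) (hD : |D| ≤ R)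
    (hy : |y| ≤ ρ) (hxy : |x - y| ≤ M) :
    |(B * x + D) * arrhenius E x - (B * y + D) * arrhenius E y|
      ≤ R * (1 + 2 * (ρ + 1) / E) * M := by
  have hBy : |B * y + D| ≤ R * (ρ + 1) := calc
    |B * y + D| ≤ |B| * |y| + |D| := (abs_add_le _ _).trans_eq (by rw [abs_mul])
    _ ≤ R * ρ + R := by gcongr; exact (abs_nonneg _).trans hB
    _ = R * (ρ + 1) := by ring
  have hgx : |arrhenius E x| ≤ 1 := by
    rw [abs_of_nonneg (arrhenius_nonneg E x)]; exact arrhenius_le_one hE.le x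
  have hgxy : |arrhenius E x - arrhenius E y| ≤ 2 / E * M :=
    (abs_arrhenius_sub_le hE x y).trans (by gcongr)
  calc _ = |B * (x - y) * arrhenius E x + (B * y + D) * (arrhenius E x - arrhenius E y)| := by
        ring_nf
    _ ≤ |B| * |x - y| * |arrhenius E x|
          + |B * y + D| * |arrhenius E x - arrhenius E y| := by
        grw [abs_add_le, abs_mul, abs_mul, abs_mul]
    _ ≤ R * M * 1 + R * (ρ + 1) * (2 / E * M) := by
        have := (abs_nonneg _).trans hxy
        have := (abs_nonneg _).trans hB
        have := (abs_nonneg _).trans hBy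
        gcongr
    _ = R * (1 + 2 * (ρ + 1) / E) * M := by ring

theorem abs_flux_sub_le {q a b c d : ℝ} (hq₀ : 0 ≤ q) (hqR : q ≤ R)
    (hac : |a - c| ≤ M) (hbd : |b - d| ≤ M) :
    |q * (a - b) - q * (c - d)| ≤ 2 * R * M := calc
  |q * (a - b) - q * (c - d)| = q * |(a - c) - (b - d)| := by
    rw [← mul_sub, abs_mul, abs_of_nonneg hq₀]; ring_nf
  _ ≤ R * (M + M) := by grw [abs_sub]; gcongr; exact hq₀.trans hqR
  _ = 2 * R * M := by ring

theorem abs_reactionNumerator_sub_le (hE : 0 < E) {B C D qₗ qᵣ x y xₗ yₗ xᵣ yᵣ : ℝ}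
    (hB : |B| ≤ R) (hC : |C| ≤ R) (hD : |D| ≤ R)
    (hqₗ : 0 ≤ qₗ ∧ qₗ ≤ R) (hqᵣ : 0 ≤ qᵣ ∧ qᵣ ≤ R) (hy : |y| ≤ ρ)
    (hxy : |x - y| ≤ M) (hxyₗ : |xₗ - yₗ| ≤ M) (hxyᵣ : |xᵣ - yᵣ| ≤ M) :
    |(-C * x + (B * x + D) * arrhenius E x - qₗ * (x - xₗ) + qᵣ * (xᵣ - x))
      - (-C * y + (B * y + D) * arrhenius E y - qₗ * (y - yₗ) + qᵣ * (yᵣ - y))|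
      ≤ R * (6 + 2 * (ρ + 1) / E) * M := by
  have hCxy : |C * (x - y)| ≤ R * M := by
    rw [abs_mul]; exact mul_le_mul hC hxy (abs_nonneg _) ((abs_nonneg _).trans hC)
  have hsource := abs_arrheniusTerm_sub_le hE hB hD hy hxy
  have hfluxₗ := abs_flux_sub_le hqₗ.1 hqₗ.2 hxy hxyₗ
  have hfluxᵣ := abs_flux_sub_le hqᵣ.1 hqᵣ.2 hxyᵣ hxy
  calc _ = |-(C * (x - y))
          + ((B * x + D) * arrhenius E x - (B * y + D) * arrhenius E y)
          - (qₗ * (x - xₗ) - qₗ * (y - yₗ)) + (qᵣ * (xᵣ - x) - qᵣ * (yᵣ - y))| := by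
        ring_nf
    _ ≤ R * M + R * (1 + 2 * (ρ + 1) / E) * M + 2 * R * M + 2 * R * M := by
        grw [abs_add_le, abs_sub, abs_add_le, abs_neg]
        linarith
    _ = R * (6 + 2 * (ρ + 1) / E) * M := by ring

theorem abs_ite_sub_ite_le {p : Prop} [Decidable p] {a b c : ℝ} (hM : 0 ≤ M)
    (h : p → |a - b| ≤ M) : |(if p then a else c) - (if p then b else c)| ≤ M := by
  split_ifs with hp
  exacts [h hp, by simpa using hM]

end Estimates

/-- Pointwise core of Lemma 3.5(iii): the reaction function is Lipschitz on
bounded balls, with constant `κ` depending only on `E, k1, R, ρ` (and not on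
`n`, on `u_e`, nor on the particular parameter values). -/
theorem stmt_14 (E k1 R : ℝ) (hE : 0 < E) (hk1 : 0 < k1) (hR : 0 < R)
    (ρ : ℝ) (hρ : 0 < ρ) :
    ∃ κ : ℝ, 0 < κ ∧
      ∀ (n : ℕ), 2 ≤ n →
      ∀ (A B C D q : ℕ → ℝ) (ue : ℝ),
        (∀ i ∈ Finset.Icc 1 n, k1 ≤ A i) →
        (∀ i ∈ Finset.Icc 1 n, |B i| ≤ R) →
        (∀ i ∈ Finset.Icc 1 n, |C i| ≤ R) →
        (∀ i ∈ Finset.Icc 1 n, |D i| ≤ R) →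
        (∀ i ∈ Finset.Icc 0 n, 0 ≤ q i ∧ q i ≤ R) →
        ∀ w v : ℕ → ℝ,
          (∀ i ∈ Finset.Icc 1 n, |w i| ≤ ρ) →
          (∀ i ∈ Finset.Icc 1 n, |v i| ≤ ρ) →
          ∀ hn : (Finset.Icc 1 n).Nonempty,
          ∀ i ∈ Finset.Icc 1 n,
            |reaction E n A B C D q ue w i - reaction E n A B C D q ue v i| ≤
              κ * (Finset.Icc 1 n).sup' hn (fun j => |w j - v j|) := by
  refine ⟨R * (6 + 2 * (ρ + 1) / E) / k1, by positivity, ?_⟩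
  intro n _ A B C D q ue hA hB hC hD hq w v _ hv hn i hi
  set M := (Finset.Icc 1 n).sup' hn fun j => |w j - v j|
  have hwv : ∀ j ∈ Finset.Icc 1 n, |w j - v j| ≤ M :=
    fun j hj => Finset.le_sup' (fun j => |w j - v j|) hj
  have hM : 0 ≤ M := (abs_nonneg _).trans (hwv i hi)
  have hneighbour (j : ℕ) := abs_ite_sub_ite_le (c := ue) hM
    fun hj : 1 ≤ j ∧ j ≤ n => hwv j (Finset.mem_Icc.2 hj)
  have hin := (Finset.mem_Icc.1 hi).2
  have hnum := abs_reactionNumerator_sub_le hE (hB i hi) (hC i hi) (hD i hi)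
    (hq (i - 1) (Finset.mem_Icc.2 ⟨(i - 1).zero_le, by omega⟩))
    (hq i (Finset.mem_Icc.2 ⟨i.zero_le, hin⟩)) (hv i hi)
    (hwv i hi) (hneighbour (i - 1)) (hneighbour (i + 1))
  have hAi := hA i hi
  rw [reaction, reaction, div_sub_div_same, abs_div, abs_of_pos (hk1.trans_le hAi)]
  calc _ ≤ R * (6 + 2 * (ρ + 1) / E) * M / k1 := div_le_div₀ (by positivity) hnum hk1 hAi
    _ = R * (6 + 2 * (ρ + 1) / E) / k1 * M := by ring
end
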